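/- Let Ω ⊆ ℝⁿ be a bounded open set, 1 < p < ∞, and let σ : Ω → ℝ be measurable with esssup σ < ∞ and σ ≥ 1 almost everywhere. Let D = esssupp(σ − 1), assume m(D) > 0, let ρ ∈ ℝⁿ be a unit vector, and let t < h_D(ρ). Then ∫_Ω (1 − σ(x)^{−1/(p−1)}) e^{pτ(x·ρ − t)} dx → +∞ as τ → ∞. -/

import Mathlib

open MeasureTheory Filter Set
open scoped RealInnerProductSpace Topology

noncomputable section

/-- The closed half-space `H_{ρ,t} = {x ∈ ℝⁿ : x·ρ ≤ t}`. -/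
def halfSpace {n : ℕ} (ρ : EuclideanSpace ℝ (Fin n)) (t : ℝ) :
    Set (EuclideanSpace ℝ (Fin n)) :=
  {x | ⟪x, ρ⟫ ≤ t}

/-- The essential support of a measurable function `f` on `Ω`: the set `Ω` minus the
union of all open sets `O ⊆ Ω` on which `f = 0` almost everywhere. -/
def essSupport {n : ℕ} (Ω : Set (EuclideanSpace ℝ (Fin n)))
    (f : EuclideanSpace ℝ (Fin n) → ℝ) : Set (EuclideanSpace ℝ (Fin n)) :=
  Ω \ ⋃ O ∈ {O : Set (EuclideanSpace ℝ (Fin n)) |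
      IsOpen O ∧ O ⊆ Ω ∧ volume {x ∈ O | f x ≠ 0} = 0}, O

/-- The essential convex support function `h_A(ρ) = inf {t ∈ ℝ : m(A \ H_{ρ,t}) = 0}`. -/
def essSuppFn {n : ℕ} (A : Set (EuclideanSpace ℝ (Fin n)))
    (ρ : EuclideanSpace ℝ (Fin n)) : ℝ :=
  sInf {t : ℝ | volume (A \ halfSpace ρ t) = 0}

/-!
Pick `s` with `t < s < h_D(ρ)`. The open set `O = Ω ∩ {x·ρ > s}` cannot carry `σ = 1` a.e.:
otherwise it would be disjoint from `D = esssupp(σ − 1)`, so `D ⊆ H_{ρ,s}` and `h_D(ρ) ≤ s`.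
As `σ ≥ 1` a.e., some `B = O ∩ {σ ≥ 1 + ε}` has positive measure. The integrand is nonnegative
and at least `(1 − (1 + ε)^{−1/(p−1)}) e^{pτ(s−t)}` on `B`, a lower bound that tends to `∞`.
-/

theorem Bornology.IsBounded.exists_abs_inner_le {E : Type*} [NormedAddCommGroup E]
    [InnerProductSpace ℝ E] {A : Set E} (hA : Bornology.IsBounded A) (ρ : E) :
    ∃ M, ∀ x ∈ A, |⟪x, ρ⟫| ≤ M := by
  obtain ⟨R, hR⟩ := hA.subset_closedBall 0
  refine ⟨R * ‖ρ‖, fun x hx => (abs_real_inner_le_norm x ρ).trans ?_⟩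
  gcongr
  simpa using hR hx

section SetIntegral

variable {α : Type*} [MeasurableSpace α] {μ : Measure α} {s B : Set α} {g φ : α → ℝ}
  {K M c δ τ : ℝ}

theorem integrableOn_mul_exp_mul (hμs : μ s ≠ ⊤) (hg : Measurable g) (hφ : Measurable φ)
    (hg0 : ∀ᵐ x ∂μ.restrict s, 0 ≤ g x) (hgK : ∀ᵐ x ∂μ.restrict s, g x ≤ K)
    (hφM : ∀ᵐ x ∂μ.restrict s, φ x ≤ M) (hτ : 0 ≤ τ) :
    IntegrableOn (fun x => g x * Real.exp (τ * φ x)) s μ := by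
  refine Integrable.mono' (integrableOn_const (C := K * Real.exp (τ * M)) hμs)
    (by fun_prop) ?_
  filter_upwards [hg0, hgK, hφM] with x hx0 hxK hxM
  rw [Real.norm_eq_abs, abs_of_nonneg (by positivity)]
  gcongr
  exact hx0.trans hxK

theorem mul_exp_mul_le_setIntegral (hμs : μ s ≠ ⊤) (hg : Measurable g) (hφ : Measurable φ)
    (hg0 : ∀ᵐ x ∂μ.restrict s, 0 ≤ g x) (hgK : ∀ᵐ x ∂μ.restrict s, g x ≤ K)
    (hφM : ∀ᵐ x ∂μ.restrict s, φ x ≤ M) (hB : MeasurableSet B) (hBs : B ⊆ s)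
    (hBg : ∀ x ∈ B, c ≤ g x) (hc : 0 ≤ c) (hBφ : ∀ x ∈ B, δ ≤ φ x) (hτ : 0 ≤ τ) :
    c * Real.exp (τ * δ) * μ.real B ≤ ∫ x in s, g x * Real.exp (τ * φ x) ∂μ := by
  have hint := integrableOn_mul_exp_mul hμs hg hφ hg0 hgK hφM hτ
  calc c * Real.exp (τ * δ) * μ.real B
      ≤ ∫ x in B, g x * Real.exp (τ * φ x) ∂μ := by
        refine setIntegral_ge_of_const_le_real hB (measure_ne_top_of_subset hBs hμs)
          (fun x hx => ?_) (hint.mono_set hBs)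
        have hcg := hBg x hx
        have hδφ := hBφ x hx
        gcongr
        linarith
    _ ≤ ∫ x in s, g x * Real.exp (τ * φ x) ∂μ := by
        refine setIntegral_mono_set hint ?_ hBs.eventuallyLE
        filter_upwards [hg0] with x hx using by positivity

theorem tendsto_setIntegral_mul_exp_mul_atTop (hμs : μ s ≠ ⊤) (hg : Measurable g)
    (hφ : Measurable φ) (hg0 : ∀ᵐ x ∂μ.restrict s, 0 ≤ g x)
    (hgK : ∀ᵐ x ∂μ.restrict s, g x ≤ K) (hφM : ∀ᵐ x ∂μ.restrict s, φ x ≤ M)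
    (hB : MeasurableSet B) (hBs : B ⊆ s) (hB0 : μ B ≠ 0)
    (hBg : ∀ x ∈ B, c ≤ g x) (hc : 0 < c) (hBφ : ∀ x ∈ B, δ ≤ φ x) (hδ : 0 < δ) :
    Tendsto (fun τ => ∫ x in s, g x * Real.exp (τ * φ x) ∂μ) atTop atTop := by
  have hBpos : 0 < μ.real B := ENNReal.toReal_pos hB0 (measure_ne_top_of_subset hBs hμs)
  have hlower : Tendsto (fun τ => c * Real.exp (τ * δ) * μ.real B) atTop atTop :=
    ((Real.tendsto_exp_atTop.comp (tendsto_id.atTop_mul_const hδ)).const_mul_atTop hc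
      ).atTop_mul_const hBpos
  refine tendsto_atTop_mono' atTop ?_ hlower
  filter_upwards [eventually_ge_atTop 0] with τ hτ
  exact mul_exp_mul_le_setIntegral hμs hg hφ hg0 hgK hφM hB hBs hBg hc.le hBφ hτ

theorem exists_measure_inter_setOf_add_le_ne_zero {S : Set α} {a : ℝ}
    (h : μ (S ∩ {x | a < g x}) ≠ 0) : ∃ ε > 0, μ (S ∩ {x | a + ε ≤ g x}) ≠ 0 := by
  by_contra! hnull
  refine h (measure_mono_null (fun x hx => ?_)
    (measure_iUnion_null fun k : ℕ => hnull (1 / (k + 1)) Nat.one_div_pos_of_nat))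
  obtain ⟨hxS, hx⟩ := hx
  obtain ⟨k, hk⟩ := exists_nat_one_div_lt (sub_pos.mpr (show a < g x from hx))
  exact mem_iUnion.mpr ⟨k, hxS, show a + 1 / ((k : ℝ) + 1) ≤ g x by linarith⟩

end SetIntegral

section EssentialSupport

variable {n : ℕ} {Ω O A : Set (EuclideanSpace ℝ (Fin n))} {f : EuclideanSpace ℝ (Fin n) → ℝ}
  {ρ : EuclideanSpace ℝ (Fin n)} {s : ℝ}

/-- The hypotheses on `A` make the set defining `essSuppFn A ρ` bounded below; without them
`sInf` would return its junk value. -/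
theorem essSuppFn_le (hA : Bornology.IsBounded A) (hA0 : volume A ≠ 0)
    (hs : volume (A \ halfSpace ρ s) = 0) : essSuppFn A ρ ≤ s := by
  obtain ⟨M, hM⟩ := hA.exists_abs_inner_le ρ
  refine csInf_le ⟨-M, fun u hu => ?_⟩ hs
  by_contra! hu'
  refine hA0 (measure_mono_null (show A ⊆ A \ halfSpace ρ u from fun x hx => ⟨hx, ?_⟩) hu)
  show ¬ ⟪x, ρ⟫ ≤ u
  linarith [hM x hx, neg_abs_le ⟪x, ρ⟫]

theorem disjoint_essSupport (hO : IsOpen O) (hOΩ : O ⊆ Ω)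
    (hf : volume (O ∩ {x | f x ≠ 0}) = 0) : Disjoint (essSupport Ω f) O :=
  Set.disjoint_left.mpr fun _ hx hxO => hx.2 (mem_biUnion ⟨hO, hOΩ, hf⟩ hxO)

theorem volume_inter_setOf_ne_zero_of_lt_essSuppFn (hΩo : IsOpen Ω)
    (hΩb : Bornology.IsBounded Ω) (hD : volume (essSupport Ω f) ≠ 0)
    (hs : s < essSuppFn (essSupport Ω f) ρ) :
    volume ((Ω ∩ {x | s < ⟪x, ρ⟫}) ∩ {x | f x ≠ 0}) ≠ 0 := by
  intro hf
  have hdisj := disjoint_essSupport (hΩo.inter (isOpen_lt continuous_const (by fun_prop)))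
    inter_subset_left hf
  have hempty : essSupport Ω f \ halfSpace ρ s = ∅ :=
    Set.eq_empty_of_forall_notMem fun x hx =>
      hdisj.notMem_of_mem_left hx.1 ⟨hx.1.1, show s < ⟪x, ρ⟫ from lt_of_not_ge hx.2⟩
  refine hs.not_ge (essSuppFn_le (hΩb.subset sdiff_subset) hD ?_)
  rw [hempty, measure_empty]

end EssentialSupport

theorem indicator_integral_blowup_above_general {n : ℕ} (Ω : Set (EuclideanSpace ℝ (Fin n)))
    (hΩo : IsOpen Ω) (hΩb : Bornology.IsBounded Ω)
    (p : ℝ) (hp : 1 < p)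
    (σ : EuclideanSpace ℝ (Fin n) → ℝ) (hσm : Measurable σ)
    (hge : ∀ᵐ x ∂(volume.restrict Ω), 1 ≤ σ x)
    (hD : 0 < volume (essSupport Ω (fun x => σ x - 1)))
    (ρ : EuclideanSpace ℝ (Fin n)) (t : ℝ)
    (ht : t < essSuppFn (essSupport Ω (fun x => σ x - 1)) ρ) :
    Tendsto (fun τ : ℝ =>
        ∫ x in Ω, (1 - σ x ^ (-(1 / (p - 1)))) * Real.exp (p * τ * (⟪x, ρ⟫ - t)))
      atTop atTop := by
  have hΩm := hΩo.measurableSet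
  obtain ⟨s, hts, hs⟩ := exists_between ht
  set O := Ω ∩ {x | s < ⟪x, ρ⟫}
  have hactive : volume (O ∩ {x | 1 < σ x}) ≠ 0 := by
    refine fun h0 => volume_inter_setOf_ne_zero_of_lt_essSuppFn hΩo hΩb hD.ne' hs
      (measure_mono_null_ae ?_ h0)
    filter_upwards [(ae_restrict_iff' hΩm).mp hge] with x hx ⟨hxO, hxσ⟩
    exact ⟨hxO, (hx hxO.1).lt_of_ne' (sub_ne_zero.mp hxσ)⟩
  obtain ⟨ε, hε, hB⟩ := exists_measure_inter_setOf_add_le_ne_zero hactive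
  set B := O ∩ {x | 1 + ε ≤ σ x}
  obtain ⟨M, hM⟩ := hΩb.exists_abs_inner_le ρ
  set q := -(1 / (p - 1))
  have hq : q < 0 := neg_neg_of_pos (one_div_pos.mpr (sub_pos.mpr hp))
  have hg0 : ∀ᵐ x ∂volume.restrict Ω, 0 ≤ 1 - σ x ^ q := by
    filter_upwards [hge] with x hx
    exact sub_nonneg.mpr (Real.rpow_le_one_of_one_le_of_nonpos hx hq.le)
  have hg1 : ∀ᵐ x ∂volume.restrict Ω, 1 - σ x ^ q ≤ 1 := by
    filter_upwards [hge] with x hx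
    linarith [Real.rpow_nonneg (zero_le_one.trans hx) q]
  have hφM : ∀ᵐ x ∂volume.restrict Ω, ⟪x, ρ⟫ - t ≤ M - t := by
    filter_upwards [ae_restrict_mem hΩm] with x hx
    linarith [le_abs_self ⟪x, ρ⟫, hM x hx]
  have hc : 0 < 1 - (1 + ε) ^ q := sub_pos.mpr (Real.rpow_lt_one_of_one_lt_of_neg (by linarith) hq)
  have hBg : ∀ x ∈ B, 1 - (1 + ε) ^ q ≤ 1 - σ x ^ q := fun x hx =>
    sub_le_sub_left (Real.rpow_le_rpow_of_nonpos (by positivity) hx.2 hq.le) 1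
  have hBφ : ∀ x ∈ B, s - t ≤ ⟪x, ρ⟫ - t := fun x hx =>
    sub_le_sub_right hx.1.2.le t
  have hBm : MeasurableSet B :=
    (hΩm.inter (measurableSet_lt measurable_const (by fun_prop))).inter
      (measurableSet_le measurable_const hσm)
  exact (tendsto_setIntegral_mul_exp_mul_atTop hΩb.measure_lt_top.ne (by fun_prop)
    (by fun_prop) hg0 hg1 hφM hBm (inter_subset_left.trans inter_subset_left) hB hBg hc hBφ
    (sub_pos.mpr hts)).comp (tendsto_id.const_mul_atTop (by linarith))

/-- If `σ ≥ 1` a.e., `esssup σ < ∞`, `D = esssupp(σ − 1)` has positive measure and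
`t < h_D(ρ)`, then `∫_Ω (1 − σ^{−1/(p−1)}) e^{pτ(x·ρ − t)} dx → +∞` as `τ → ∞`. -/
theorem indicator_integral_blowup_above {n : ℕ} (Ω : Set (EuclideanSpace ℝ (Fin n)))
    (hΩo : IsOpen Ω) (hΩb : Bornology.IsBounded Ω)
    (p : ℝ) (hp : 1 < p)
    (σ : EuclideanSpace ℝ (Fin n) → ℝ) (hσm : Measurable σ)
    (hub : ∃ C : ℝ, ∀ᵐ x ∂(volume.restrict Ω), σ x ≤ C)
    (hge : ∀ᵐ x ∂(volume.restrict Ω), 1 ≤ σ x)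
    (hD : 0 < volume (essSupport Ω (fun x => σ x - 1)))
    (ρ : EuclideanSpace ℝ (Fin n)) (hρ : ‖ρ‖ = 1) (t : ℝ)
    (ht : t < essSuppFn (essSupport Ω (fun x => σ x - 1)) ρ) :
    Tendsto (fun τ : ℝ =>
        ∫ x in Ω, (1 - σ x ^ (-(1 / (p - 1)))) * Real.exp (p * τ * (⟪x, ρ⟫ - t)))
      atTop atTop :=
  indicator_integral_blowup_above_general Ω hΩo hΩb p hp σ hσm hge hD ρ t ht
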